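/- Let P and Q be positive joint distributions on 𝒳 × 𝒴 and let P* be a minimizer of min{ D(P̃‖Q) : P̃ a joint distribution with P̃_X = P_X and P̃_Y = P_Y }. Define the projected relative entropy density ȷ_{P‖Q}(x,y) = log(P*(x,y)/Q(x,y)). Then the expectation of ȷ_{P‖Q} under P equals the projected relative entropy: Σ_{x,y} P(x,y)·ȷ_{P‖Q}(x,y) = E(P‖Q). -/

import Mathlib

open scoped Classical BigOperators

noncomputable section

variable {X Y : Type*} [Fintype X] [Fintype Y]

/-- `P` is a joint distribution on `X × Y`. -/
def IsDist (P : X × Y → ℝ) : Prop :=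
  (∀ z, 0 ≤ P z) ∧ ∑ z : X × Y, P z = 1

/-- `P` is a positive joint distribution on `X × Y`. -/
def IsPos (P : X × Y → ℝ) : Prop :=
  (∀ z, 0 < P z) ∧ ∑ z : X × Y, P z = 1

/-- The first marginal of a joint distribution. -/
def margX (P : X × Y → ℝ) (x : X) : ℝ := ∑ y : Y, P (x, y)

/-- The second marginal of a joint distribution. -/
def margY (P : X × Y → ℝ) (y : Y) : ℝ := ∑ x : X, P (x, y)

/-- Relative entropy `D(P‖Q)` (natural log; `Real.log 0 = 0` realizes `0·log 0 = 0`). -/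
def relEnt (P Q : X × Y → ℝ) : ℝ := ∑ z : X × Y, P z * Real.log (P z / Q z)

/-- Projected relative entropy `E(P‖Q)`. -/
def projE (P Q : X × Y → ℝ) : ℝ :=
  sInf { d : ℝ | ∃ P' : X × Y → ℝ,
    IsDist P' ∧ margX P' = margX P ∧ margY P' = margY P ∧ d = relEnt P' Q }

/-- `R ∈ ℰ^{xy}(S)` : `R` has the same correlation coordinates as `S`. -/
def SameCorr (R S : X × Y → ℝ) : Prop :=
  ∃ a1 : X → ℝ, ∃ a2 : Y → ℝ,
    ∀ x : X, ∀ y : Y, Real.log (R (x, y) / S (x, y)) = a1 x + a2 y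

/-- The type (empirical distribution) of a sequence. -/
def empDist {n : ℕ} (x : Fin n → X) (a : X) : ℝ :=
  ((Finset.univ.filter fun i => x i = a).card : ℝ) / n

/-- The joint type of a pair of sequences. -/
def empJoint {n : ℕ} (x : Fin n → X) (y : Fin n → Y) (z : X × Y) : ℝ :=
  ((Finset.univ.filter fun i => x i = z.1 ∧ y i = z.2).card : ℝ) / n

/-- Probability of a set under the `n`-fold i.i.d. product of `P`. -/
def prodProb (P : X × Y → ℝ) (n : ℕ) (A : Set ((Fin n → X) × (Fin n → Y))) : ℝ :=
  ∑ z : (Fin n → X) × (Fin n → Y),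
    if z ∈ A then ∏ i : Fin n, P (z.1 i, z.2 i) else 0

/-- `P` is a joint type with denominator `n` (an element of `𝒫ₙ(𝒳 × 𝒴)`). -/
def IsTypeN (n : ℕ) (P : X × Y → ℝ) : Prop :=
  IsDist P ∧ ∀ z : X × Y, ∃ k : ℕ, P z = (k : ℝ) / n

/-- `Eₙ(P̄‖Q)` : projected relative entropy restricted to joint types. -/
def En (n : ℕ) (Pbar Q : X × Y → ℝ) : ℝ :=
  sInf { d : ℝ | ∃ Pt : X × Y → ℝ,
    IsTypeN n Pt ∧ margX Pt = margX Pbar ∧ margY Pt = margY Pbar ∧ d = relEnt Pt Q }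

/-- Standard normal cumulative distribution function `Φ`. -/
def stdNormalCDF (t : ℝ) : ℝ :=
  ∫ u in Set.Iic t, (Real.sqrt (2 * Real.pi))⁻¹ * Real.exp (-(u ^ 2) / 2)

/-- Inverse of the standard normal CDF, `Φ⁻¹`. -/
def stdNormalCDFInv (e : ℝ) : ℝ := Function.invFun stdNormalCDF e

/-!
Moving from the minimizer `P*` towards `P` along the segment `P* + t • (P - P*)` never leaves the
couplings of `P_X` and `P_Y`. If `P*` vanished at some point, the term `t log t` created there
would make the relative entropy drop for small `t > 0`; so `P*` is positive, the segment stays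
feasible for small negative `t` as well, and `t = 0` is an interior minimum. Its vanishing
derivative `Σ (P - P*) (log (P* / Q) + 1) = 0`, together with `Σ P = Σ P*`, is the claim.
-/

open Real Filter Topology AffineMap

lemma lineMap_nonneg {α : Type*} {R S : α → ℝ} (hR : 0 ≤ R) (hS : 0 ≤ S) {t : ℝ}
    (ht : t ∈ Set.Icc 0 1) : 0 ≤ lineMap R S t := fun a => by
  rw [pi_lineMap_apply, lineMap_apply_ring]
  exact add_nonneg (mul_nonneg (sub_nonneg.2 ht.2) (hR a)) (mul_nonneg ht.1 (hS a))

section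

variable {P Q R S : X × Y → ℝ}

lemma sub_le_mul_log_div {p q : ℝ} (hp : 0 ≤ p) (hq : 0 < q) : p - q ≤ p * log (p / q) := by
  rcases hp.eq_or_lt with rfl | hp
  · simpa using hq.le
  · have h := one_sub_inv_le_log_of_pos (div_pos hp hq)
    rw [inv_div] at h
    calc p - q = p * (1 - q / p) := by field_simp
      _ ≤ p * log (p / q) := mul_le_mul_of_nonneg_left h hp.le

lemma convexOn_mul_log_div {q : ℝ} (hq : 0 < q) :
    ConvexOn ℝ (Set.Ici 0) fun x => x * log (x / q) := by
  refine (convexOn_mul_log.add (((-log q) • LinearMap.id : ℝ →ₗ[ℝ] ℝ).convexOn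
    (convex_Ici 0))).congr fun x hx => ?_
  rcases (Set.mem_Ici.1 hx).eq_or_lt with rfl | hx
  · simp
  · simp [log_div hx.ne' hq.ne']
    ring

lemma hasDerivAt_lineMap_mul_log_div {r s q : ℝ} (hr : 0 < r) (hq : 0 < q) :
    HasDerivAt (fun t : ℝ => lineMap r s t * log (lineMap r s t / q))
      ((s - r) * (log (r / q) + 1)) 0 := by
  have hline : HasDerivAt (fun t : ℝ => lineMap r s t) (s - r) 0 := by
    simpa [lineMap_apply_ring'] using (hasDerivAt_mul_const (s - r)).add_const r
  refine (hline.fun_mul ((hline.div_const q).log (by simp [hr.ne', hq.ne']))).congr_deriv ?_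
  simp only [lineMap_apply_zero]
  field_simp

lemma relEnt_nonneg (hP : IsDist P) (hQ : IsPos Q) : 0 ≤ relEnt P Q := by
  have h : ∑ z, (P z - Q z) ≤ relEnt P Q :=
    Finset.sum_le_sum fun z _ => sub_le_mul_log_div (hP.1 z) (hQ.1 z)
  rwa [Finset.sum_sub_distrib, hP.2, hQ.2, sub_self] at h

lemma relEnt_le_of_eq_projE (hQ : IsPos Q) (hmin : relEnt R Q = projE P Q) {P' : X × Y → ℝ}
    (hP' : IsDist P') (hX : margX P' = margX P) (hY : margY P' = margY P) :
    relEnt R Q ≤ relEnt P' Q :=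
  hmin ▸ csInf_le ⟨0, by rintro d ⟨P'', hP'', -, -, rfl⟩; exact relEnt_nonneg hP'' hQ⟩
    ⟨P', hP', hX, hY, rfl⟩

lemma isDist_lineMap (hR : IsDist R) (hS : IsDist S) {t : ℝ}
    (ht : ∀ z, 0 ≤ lineMap R S t z) : IsDist (lineMap R S t) := by
  refine ⟨ht, ?_⟩
  simp only [pi_lineMap_apply, lineMap_apply_ring', Finset.sum_add_distrib, ← Finset.mul_sum,
    Finset.sum_sub_distrib, hR.2, hS.2]
  ring

omit [Fintype X] in
lemma margX_lineMap (h : margX S = margX R) (t : ℝ) : margX (lineMap R S t) = margX R := by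
  funext x
  have hx := congrFun h x
  simp only [margX, pi_lineMap_apply, lineMap_apply_ring', Finset.sum_add_distrib,
    ← Finset.mul_sum, Finset.sum_sub_distrib] at hx ⊢
  rw [hx, sub_self, mul_zero, zero_add]

omit [Fintype Y] in
lemma margY_lineMap (h : margY S = margY R) (t : ℝ) : margY (lineMap R S t) = margY R := by
  funext y
  have hy := congrFun h y
  simp only [margY, pi_lineMap_apply, lineMap_apply_ring', Finset.sum_add_distrib,
    ← Finset.mul_sum, Finset.sum_sub_distrib] at hy ⊢
  rw [hy, sub_self, mul_zero, zero_add]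

lemma relEnt_lineMap_sub_le (hR : ∀ z, 0 ≤ R z) (hS : ∀ z, 0 < S z) (hQ : ∀ z, 0 < Q z)
    {z₀ : X × Y} (hz₀ : R z₀ = 0) {t : ℝ} (ht : t ∈ Set.Ioc 0 1) :
    relEnt (lineMap R S t) Q - relEnt R Q
      ≤ t * (relEnt S Q - relEnt R Q + S z₀ * log t) := by
  have hterm : ∀ z, lineMap R S t z * log (lineMap R S t z / Q z) - R z * log (R z / Q z)
      ≤ t * (S z * log (S z / Q z) - R z * log (R z / Q z))
        + if z = z₀ then t * (S z₀ * log t) else 0 := by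
    intro z
    split_ifs with hz
    · subst hz
      simp only [pi_lineMap_apply, lineMap_apply_ring', hz₀, sub_zero, add_zero, zero_mul,
        mul_div_assoc, log_mul ht.1.ne' (div_pos (hS z) (hQ z)).ne']
      linarith
    · have hchord := (convexOn_mul_log_div (hQ z)).2 (Set.mem_Ici.2 (hR z))
        (Set.mem_Ici.2 (hS z).le) (sub_nonneg.2 ht.2) ht.1.le (sub_add_cancel 1 t)
      simp only [smul_eq_mul] at hchord
      rw [pi_lineMap_apply, lineMap_apply_ring]
      linarith
  calc relEnt (lineMap R S t) Q - relEnt R Q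
      = ∑ z, (lineMap R S t z * log (lineMap R S t z / Q z) - R z * log (R z / Q z)) := by
        rw [relEnt, relEnt, Finset.sum_sub_distrib]
    _ ≤ ∑ z, (t * (S z * log (S z / Q z) - R z * log (R z / Q z))
          + if z = z₀ then t * (S z₀ * log t) else 0) := Finset.sum_le_sum fun z _ => hterm z
    _ = t * (relEnt S Q - relEnt R Q + S z₀ * log t) := by
        rw [Finset.sum_add_distrib, Finset.sum_ite_eq', if_pos (Finset.mem_univ _),
          ← Finset.mul_sum, Finset.sum_sub_distrib, relEnt, relEnt]
        ring

lemma pos_of_relEnt_le_lineMap (hR : ∀ z, 0 ≤ R z) (hS : ∀ z, 0 < S z) (hQ : ∀ z, 0 < Q z)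
    (hmin : ∀ t ∈ Set.Ioc (0 : ℝ) 1, relEnt R Q ≤ relEnt (lineMap R S t) Q) (z₀ : X × Y) :
    0 < R z₀ := by
  refine (hR z₀).lt_of_ne' fun hz₀ => ?_
  have hlog : ∀ᶠ t in 𝓝[>] 0, relEnt S Q - relEnt R Q + S z₀ * log t < 0 :=
    (tendsto_atBot_add_const_left _ _
      (tendsto_log_nhdsGT_zero.const_mul_atBot (hS z₀))).eventually_lt_atBot 0
  obtain ⟨t, hneg, ht⟩ := (hlog.and (Ioc_mem_nhdsGT zero_lt_one)).exists
  have hdrop := relEnt_lineMap_sub_le hR hS hQ hz₀ ht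
  nlinarith [hmin t ht, mul_neg_of_pos_of_neg ht.1 hneg]

lemma hasDerivAt_relEnt_lineMap (hR : ∀ z, 0 < R z) (hQ : ∀ z, 0 < Q z) :
    HasDerivAt (fun t : ℝ => relEnt (lineMap R S t) Q)
      (∑ z, (S z - R z) * (log (R z / Q z) + 1)) 0 := by
  simp only [relEnt]
  exact HasDerivAt.fun_sum fun z _ => hasDerivAt_lineMap_mul_log_div (hR z) (hQ z)

lemma isLocalMin_relEnt_lineMap (hR : ∀ z, 0 < R z)
    (hmin : ∀ t : ℝ, (∀ z, 0 ≤ lineMap R S t z) → relEnt R Q ≤ relEnt (lineMap R S t) Q) :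
    IsLocalMin (fun t : ℝ => relEnt (lineMap R S t) Q) 0 := by
  have hnear : ∀ᶠ t in 𝓝 (0 : ℝ), ∀ z, 0 < lineMap R S t z := by
    refine eventually_all.2 fun z => continuousAt_const.eventually_lt ?_ (by simpa using hR z)
    simp only [pi_lineMap_apply, lineMap_apply_ring']
    fun_prop
  filter_upwards [hnear] with t ht
  simpa using hmin t fun z => (ht z).le

lemma sum_mul_log_div_eq_relEnt (hR : ∀ z, 0 < R z) (hQ : ∀ z, 0 < Q z)
    (hsum : ∑ z, S z = ∑ z, R z) (hloc : IsLocalMin (fun t : ℝ => relEnt (lineMap R S t) Q) 0) :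
    ∑ z, S z * log (R z / Q z) = relEnt R Q := by
  have hcrit := hloc.hasDerivAt_eq_zero (hasDerivAt_relEnt_lineMap hR hQ)
  simp only [sub_mul, mul_add, mul_one, Finset.sum_add_distrib, Finset.sum_sub_distrib,
    hsum] at hcrit
  rw [relEnt]
  linarith

end

theorem expectation_projected_density_general
    (P Q Ps : X × Y → ℝ) (hP : IsPos P) (hQ : IsPos Q)
    (hPs : IsDist Ps) (hPsX : margX Ps = margX P) (hPsY : margY Ps = margY P)
    (hmin : relEnt Ps Q = projE P Q) :
    ∑ z : X × Y, P z * Real.log (Ps z / Q z) = projE P Q := by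
  have hPdist : IsDist P := ⟨fun z => (hP.1 z).le, hP.2⟩
  have hle : ∀ t : ℝ, (∀ z, 0 ≤ lineMap Ps P t z) → relEnt Ps Q ≤ relEnt (lineMap Ps P t) Q :=
    fun t ht => relEnt_le_of_eq_projE hQ hmin (isDist_lineMap hPs hPdist ht)
      ((margX_lineMap hPsX.symm t).trans hPsX) ((margY_lineMap hPsY.symm t).trans hPsY)
  have hpos : ∀ z, 0 < Ps z := pos_of_relEnt_le_lineMap hPs.1 hP.1 hQ.1 fun t ht =>
    hle t (lineMap_nonneg hPs.1 hPdist.1 (Set.Ioc_subset_Icc_self ht))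
  have hloc := isLocalMin_relEnt_lineMap hpos hle
  rw [← hmin]
  exact sum_mul_log_div_eq_relEnt hpos hQ.1 (by rw [hP.2, hPs.2]) hloc

/-- the expectation of the projected relative entropy density under `P`
equals the projected relative entropy. -/
theorem expectation_projected_density
    [Nonempty X] [Nonempty Y]
    (P Q Ps : X × Y → ℝ) (hP : IsPos P) (hQ : IsPos Q)
    (hPs : IsDist Ps) (hPsX : margX Ps = margX P) (hPsY : margY Ps = margY P)
    (hmin : relEnt Ps Q = projE P Q) :
    ∑ z : X × Y, P z * Real.log (Ps z / Q z) = projE P Q :=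
  expectation_projected_density_general P Q Ps hP hQ hPs hPsX hPsY hmin
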